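/- arXiv:1805.04834 — 4 statements merged into one kernel-verified Lean document; each statement's English description precedes it below -/
import Mathlib

section
/- Let M be a mapping modeling and let M⁺ be the structure obtained from M by marking exactly one element of its domain with a new unary relation (keeping the same domain, measure and function). Then: (1) M⁺ is a modeling; (2) M⁺ satisfies the finitary mass transport principle if and only if M does; (3) M⁺ has the finite model property if and only if M does. -/
open FirstOrder Language Filter Topology Set
open MeasureTheory (Measure IsProbabilityMeasure)
open scoped ENNReal NNReal

namespace MapApprox

/-- The mapping signature: one unary function symbol and `c` unary relation symbols. -/
def mapLang (c : ℕ) : FirstOrder.Language :=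
  ⟨fun n => match n with | 1 => Unit | _ => Empty,
   fun n => match n with | 1 => Fin c | _ => Empty⟩

/-- The unary function symbol. -/
def fsym (c : ℕ) : (mapLang c).Functions 1 := Unit.unit

/-- The `k`-th unary relation symbol. -/
def rsym (c : ℕ) (k : Fin c) : (mapLang c).Relations 1 := k

/-- The interpretation of the function symbol in a mapping. -/
def fmap (c : ℕ) (M : Type*) [(mapLang c).Structure M] : M → M :=
  fun x => Structure.funMap (fsym c) ![x]

/-- The interpretation of the `k`-th unary relation in a mapping. -/
def relP (c : ℕ) {M : Type*} [(mapLang c).Structure M] (k : Fin c) (x : M) : Prop :=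
  Structure.RelMap (rsym c k) ![x]

/-- The Stone pairing of a formula with a structure equipped with a probability measure. -/
noncomputable def modPairing (c p : ℕ) (M : Type*) [MeasurableSpace M]
    [(mapLang c).Structure M] (ν : Measure M) (φ : (mapLang c).Formula (Fin p)) : ℝ :=
  ((Measure.pi fun _ : Fin p => ν) {v : Fin p → M | φ.Realize v}).toReal

/-- The Stone pairing of a formula with a finite structure (uniform measure). -/
noncomputable def finPairing (c p : ℕ) (F : Type*) [Fintype F]
    [(mapLang c).Structure F] (φ : (mapLang c).Formula (Fin p)) : ℝ :=
  (Set.ncard {v : Fin p → F | φ.Realize v} : ℝ) / (Fintype.card F : ℝ) ^ p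

/-- A structure on a measurable space is a modeling if every definable set is measurable. -/
def IsModeling (c : ℕ) (M : Type*) [MeasurableSpace M] [(mapLang c).Structure M] : Prop :=
  ∀ (p : ℕ) (φ : (mapLang c).Formula (Fin p)), MeasurableSet {v : Fin p → M | φ.Realize v}

/-- A measure is atomless if every singleton has measure zero. -/
def Atomless {M : Type*} [MeasurableSpace M] (ν : Measure M) : Prop :=
  ∀ v : M, ν {v} = 0

/-- The Finitary Mass Transport Principle for a map `f` and a measure `ν`. -/
def FMTP {X : Type*} [MeasurableSpace X] (f : X → X) (ν : Measure X) : Prop :=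
  ν {x | (f ⁻¹' {x}).Infinite} = 0 ∧
    ∀ A B : Set X, MeasurableSet A → MeasurableSet B →
      A ⊆ {x | (f ⁻¹' {x}).Finite} → B ⊆ {x | (f ⁻¹' {x}).Finite} →
      ν (A ∩ f ⁻¹' B) = ∫⁻ y in B, ((f ⁻¹' {y} ∩ A).encard : ℝ≥0∞) ∂ν

/-- The finite model property: every sentence satisfied by `M` has a finite model. -/
def HasFMP (c : ℕ) (M : Type*) [(mapLang c).Structure M] : Prop :=
  ∀ θ : (mapLang c).Sentence, Sentence.Realize M θ →
    ∃ (F : Type) (st : (mapLang c).Structure F), Finite F ∧ @Sentence.Realize _ F st θ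

/-- A bundled mapping modeling. -/
structure MMod (c : ℕ) where
  carrier : Type
  [ms : MeasurableSpace carrier]
  [sb : StandardBorelSpace carrier]
  [st : (mapLang c).Structure carrier]
  ν : Measure carrier
  prob : IsProbabilityMeasure ν
  borel : IsModeling c carrier

attribute [instance] MMod.ms MMod.sb MMod.st

/-- A bundled finite mapping. -/
structure FinMapping (c : ℕ) where
  carrier : Type
  [fin : Fintype carrier]
  [st : (mapLang c).Structure carrier]

attribute [instance] FinMapping.fin FinMapping.st

/-- `x` belongs to the `r`-ball of `u` in the Gaifman graph of a mapping with function `f`. -/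
def ballMem {M : Type*} (f : M → M) (r : ℕ) (u x : M) : Prop :=
  ∃ a b : ℕ, a + b ≤ r ∧ f^[a] u = f^[b] x

/-- The union of the `r`-balls around the entries of a tuple. -/
def tupleBall {M : Type*} {p : ℕ} (f : M → M) (r : ℕ) (u : Fin p → M) : Set M :=
  {x | ∃ i, ballMem f r (u i) x}

/-- `g` is an isomorphism between the `r`-balls of the tuples `u` and `v`. -/
def BallIso (c : ℕ) {p : ℕ} (r : ℕ) (M N : Type*)
    [(mapLang c).Structure M] [(mapLang c).Structure N]
    (u : Fin p → M) (v : Fin p → N) (g : M → N) : Prop :=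
  Set.BijOn g (tupleBall (fmap c M) r u) (tupleBall (fmap c N) r v) ∧
    (∀ i, g (u i) = v i) ∧
    (∀ x ∈ tupleBall (fmap c M) r u, ∀ k : Fin c, (relP c k x ↔ relP c k (g x))) ∧
    (∀ x ∈ tupleBall (fmap c M) r u, ∀ y ∈ tupleBall (fmap c M) r u,
      (fmap c M x = y ↔ fmap c N (g x) = g y))

/-- A formula is `r`-local if its satisfaction only depends on the isomorphism type of the
`r`-balls around its free variables. -/
def IsRLocal (c p : ℕ) (r : ℕ) (φ : (mapLang c).Formula (Fin p)) : Prop :=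
  ∀ (M N : Type) [(mapLang c).Structure M] [(mapLang c).Structure N]
    (u : Fin p → M) (v : Fin p → N) (g : M → N),
    BallIso c r M N u v g → (φ.Realize u ↔ φ.Realize v)

/-- A formula is local if it is `r`-local for some `r`. -/
def IsLocalFormula (c p : ℕ) (φ : (mapLang c).Formula (Fin p)) : Prop :=
  ∃ r, IsRLocal c p r φ

/-- A term is clean if it involves no composition of function symbols. -/
def TermClean {c : ℕ} {α : Type*} : (mapLang c).Term α → Prop
  | FirstOrder.Language.Term.var _ => True
  | FirstOrder.Language.Term.func _ ts => ∀ i, ∃ a, ts i = FirstOrder.Language.Term.var a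

/-- A formula is clean if all its terms are clean. -/
def FormulaClean {c : ℕ} {α : Type*} :
    ∀ {n : ℕ}, (mapLang c).BoundedFormula α n → Prop
  | _, FirstOrder.Language.BoundedFormula.falsum => True
  | _, FirstOrder.Language.BoundedFormula.equal t₁ t₂ => TermClean t₁ ∧ TermClean t₂
  | _, FirstOrder.Language.BoundedFormula.rel _ ts => ∀ i, TermClean (ts i)
  | _, FirstOrder.Language.BoundedFormula.imp φ ψ => FormulaClean φ ∧ FormulaClean ψ
  | _, FirstOrder.Language.BoundedFormula.all φ => FormulaClean φ

/-- The number of nested quantifiers of a formula. -/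
def qdepth {c : ℕ} {α : Type*} : ∀ {n : ℕ}, (mapLang c).BoundedFormula α n → ℕ
  | _, FirstOrder.Language.BoundedFormula.falsum => 0
  | _, FirstOrder.Language.BoundedFormula.equal _ _ => 0
  | _, FirstOrder.Language.BoundedFormula.rel _ _ => 0
  | _, FirstOrder.Language.BoundedFormula.imp φ ψ => max (qdepth φ) (qdepth ψ)
  | _, FirstOrder.Language.BoundedFormula.all φ => qdepth φ + 1

/-- The quantifier rank of a formula: the least number of nested quantifiers of a clean formula
logically equivalent to it. -/
noncomputable def qrank {c : ℕ} {α : Type*} (φ : (mapLang c).Formula α) : ℕ :=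
  sInf {d | ∃ ψ : (mapLang c).Formula α, FormulaClean ψ ∧ qdepth ψ ≤ d ∧
    ∀ (M : Type) [(mapLang c).Structure M] (w : α → M), (φ.Realize w ↔ ψ.Realize w)}

/-- `M ≡_r N` : `M` and `N` satisfy the same sentences of quantifier rank at most `r`. -/
def ElemEquiv (c r : ℕ) (M N : Type*) [(mapLang c).Structure M] [(mapLang c).Structure N] :
    Prop :=
  ∀ θ : (mapLang c).Sentence, qrank θ ≤ r →
    (Sentence.Realize M θ ↔ Sentence.Realize N θ)

/-- `dist_p^r(M,N)`: the supremum of `|⟨φ,M⟩ - ⟨φ,N⟩|` over formulas `φ` with `p` free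
variables and quantifier rank at most `r`. -/
noncomputable def distPR (c p r : ℕ) (M N : Type*) [MeasurableSpace M] [MeasurableSpace N]
    [(mapLang c).Structure M] [(mapLang c).Structure N]
    (νM : Measure M) (νN : Measure N) : ℝ :=
  ⨆ φ : {φ : (mapLang c).Formula (Fin p) // qrank φ ≤ r},
    |modPairing c p M νM φ.1 - modPairing c p N νN φ.1|

/-- `ldist_p^r(M,N)`: the supremum of `|⟨φ,M⟩ - ⟨φ,N⟩|` over local formulas `φ` with `p` free
variables and local rank at most `r`. -/
noncomputable def ldistPR (c p r : ℕ) (M N : Type*) [MeasurableSpace M] [MeasurableSpace N]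
    [(mapLang c).Structure M] [(mapLang c).Structure N]
    (νM : Measure M) (νN : Measure N) : ℝ :=
  ⨆ φ : {φ : (mapLang c).Formula (Fin p) // IsRLocal c p r φ},
    |modPairing c p M νM φ.1 - modPairing c p N νN φ.1|

/-- The Stone pairing of the formula `dist(x₁,x₂) ≤ r` with a modeling. -/
noncomputable def deltaPairing (c r : ℕ) (M : Type*) [MeasurableSpace M]
    [(mapLang c).Structure M] (ν : Measure M) : ℝ :=
  ((Measure.pi fun _ : Fin 2 => ν)
    {v : Fin 2 → M | ballMem (fmap c M) r (v 0) (v 1)}).toReal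

end MapApprox

namespace MapApprox

open FirstOrder Language Filter Topology Set
open MeasureTheory (Measure IsProbabilityMeasure)
open scoped ENNReal

/-! ### Local types -/

/-- A set of formulas in one free variable, thought of as a candidate local type. -/
abbrev TypeSet (c : ℕ) := Set ((mapLang c).Formula (Fin 1))

/-- The rank-`r` local type of an element: the set of `r`-local formulas it satisfies. -/
def localTypeOf (c r : ℕ) (M : Type*) [(mapLang c).Structure M] (x : M) : TypeSet c :=
  {φ | IsRLocal c 1 r φ ∧ φ.Realize (fun _ => x)}

/-- A set of formulas is a rank-`r` local type if it is realized in some mapping. -/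
def IsLocalType (c r : ℕ) (T : TypeSet c) : Prop :=
  ∃ (M : Type) (_ : (mapLang c).Structure M) (x : M), T = localTypeOf c r M x

/-- The projection of a local type to its rank-`r` part. -/
def projType (c r : ℕ) (T : TypeSet c) : TypeSet c :=
  {φ | φ ∈ T ∧ IsRLocal c 1 r φ}

/-- `admPlus c R r τ t = 1` iff the rank-`R` local type `τ` of an element forces its image to
have rank-`r` local type `t`, and `0` otherwise. -/
noncomputable def admPlus (c R r : ℕ) (τ t : TypeSet c) : ℕ :=
  letI := Classical.propDecidable
  if (∀ (M : Type) [(mapLang c).Structure M] (x : M),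
      localTypeOf c R M x = τ → localTypeOf c r M (fmap c M x) = t) then 1 else 0

/-- `admMinus c R r τ t` : the largest `a ≤ r+1` such that the rank-`R` local type `τ` of an
element forces it to have at least `a` preimages of rank-`r` local type `t`. -/
noncomputable def admMinus (c R r : ℕ) (τ t : TypeSet c) : ℕ :=
  sSup {a : ℕ | a ≤ r + 1 ∧ ∀ (M : Type) [(mapLang c).Structure M] (x : M),
    localTypeOf c R M x = τ →
      (a : ℕ∞) ≤ ({u : M | fmap c M u = x ∧ localTypeOf c r M u = t}).encard}

/-- The `(R,r)`-restricted finitary mass transport principle for a (finitely supported)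
probability distribution `ρ` on rank-`R` local types. -/
def RestrictedFMTP (c R r : ℕ) (ρ : TypeSet c → ℝ) : Prop :=
  ∃ s : TypeSet c → TypeSet c → ℝ,
    (∀ τ t, 0 < ρ τ → (∃ τ', 0 < ρ τ' ∧ projType c r τ' = t) →
      (((∃ k : ℕ, k ≤ r ∧ s τ t = (k : ℝ)) ∨ (r : ℝ) < s τ t) ∧
        min (r : ℝ) (admMinus c R r τ t : ℝ) = min (r : ℝ) (s τ t))) ∧
    ∀ t₁ t₂ : TypeSet c,
      (∃ τ, 0 < ρ τ ∧ projType c r τ = t₁) → (∃ τ, 0 < ρ τ ∧ projType c r τ = t₂) →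
      (∑ᶠ τ₁ ∈ {τ | 0 < ρ τ ∧ projType c r τ = t₁}, (admPlus c R r τ₁ t₂ : ℝ) * ρ τ₁) =
      (∑ᶠ τ₂ ∈ {τ | 0 < ρ τ ∧ projType c r τ = t₂}, s τ₂ t₁ * ρ τ₂)

/-! ### Atomic formulas -/

/-- The formula `f^ℓ(x) = x`. -/
def iterEqFormula (c : ℕ) (ℓ : ℕ) : (mapLang c).Formula (Fin 1) :=
  Term.equal ((fun t => Functions.apply₁ (fsym c) t)^[ℓ] (Term.var (0 : Fin 1)))
    (Term.var (0 : Fin 1))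

/-- The atomic formula `M_k(x)`. -/
def relFormula (c : ℕ) (k : Fin c) : (mapLang c).Formula (Fin 1) :=
  Relations.formula₁ (rsym c k) (Term.var (0 : Fin 1))

/-! ### Restrictions, marking, and miscellaneous definitions -/

/-- The subset of a structure defined by a formula with one free variable. -/
def defSet (c : ℕ) (M : Type*) [(mapLang c).Structure M] (φ : (mapLang c).Formula (Fin 1)) :
    Set M := {x | φ.Realize (fun _ => x)}

/-- The function of the restriction of a mapping to a subset `X`. -/
noncomputable def restrictFun (c : ℕ) (M : Type*) [(mapLang c).Structure M] (X : Set M) :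
    X → X := fun v =>
  letI := Classical.propDecidable
  if h : fmap c M v.1 ∈ X then ⟨fmap c M v.1, h⟩ else v

/-- The normalized restriction of a measure to a subset. -/
noncomputable def restrictMeasure {M : Type*} [MeasurableSpace M] (ν : Measure M) (X : Set M) :
    Measure X := (ν X)⁻¹ • MeasureTheory.Measure.comap Subtype.val ν

/-- Marking one element `m` with a new unary relation: the resulting structure for the
signature with one extra unary relation. -/
def extStructure (c : ℕ) (M : Type*) [(mapLang c).Structure M] (m : M) :
    (mapLang (c + 1)).Structure M where
  funMap {n} f v :=
    match n, f, v with
    | 1, _, v => fmap c M (v 0)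
  RelMap {n} k v :=
    match n, k, v with
    | 1, k, v =>
        letI := Classical.propDecidable
        let k' : Fin (c + 1) := k
        if h : (k' : ℕ) < c then relP c ⟨(k' : ℕ), h⟩ (v 0) else v 0 = m

/-- A mapping is connected when any two elements are joined in the Gaifman graph. -/
def ConnectedMap {M : Type*} (f : M → M) : Prop :=
  ∀ u v : M, ∃ a b : ℕ, f^[a] u = f^[b] v

/-- The set of vertices lying on an undirected path of length at least `d+1` with endpoint
`rt` in the digraph `E`. -/
def pathSet {M : Type*} (E : M → M → Prop) (rt : M) (d : ℕ) : Set M :=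
  {x | ∃ (n : ℕ) (w : ℕ → M), d + 1 ≤ n ∧ w 0 = rt ∧
    (∀ i ≤ n, ∀ j ≤ n, w i = w j → i = j) ∧
    (∀ i < n, E (w i) (w (i + 1)) ∨ E (w (i + 1)) (w i)) ∧
    ∃ i ≤ n, w i = x}

/-- `E(u)`: the set of iterated preimages of `u`. -/
def iterPreimages {L : Type*} (f : L → L) (u : L) : Set L :=
  ⋃ k ∈ {k : ℕ | 1 ≤ k}, (f^[k]) ⁻¹' {u}

end MapApprox

namespace MapApprox

open FirstOrder Language Filter Topology Set
open MeasureTheory (Measure IsProbabilityMeasure)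
open scoped ENNReal

/-!
The marked relation is definable in `M` from the parameter `m` (as `x = m`), so every formula of
the marked signature translates (`unmark`) into a formula of the original signature with one extra
free variable standing for `m`. Hence every definable set of `M⁺` is the section at `m` of a
definable set of `M`, and is measurable. The function symbol is interpreted as before, so the two
FMTP statements coincide. A finite model of a sentence of `M` is obtained from a finite model of
the same sentence read in `M⁺` by forgetting the mark; conversely, if `M⁺ ⊨ θ` then
`M ⊨ ∃ y, unmark θ (y)`, and a finite model of this sentence with a witness `y` marked
satisfies `θ`.
-/

theorem eq_vec_fin_one {α : Type*} (v : Fin 1 → α) : v = ![v 0] :=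
  funext fun i => by rw [Fin.fin_one_eq_zero i]; rfl

section

variable {c : ℕ} {M : Type*} [(mapLang c).Structure M]

theorem fmap_extStructure (m : M) : @fmap (c + 1) M (extStructure c M m) = fmap c M := rfl

theorem funMap_extStructure (m : M) (f : (mapLang (c + 1)).Functions 1) (v : Fin 1 → M) :
    @Structure.funMap _ M (extStructure c M m) 1 f v = Structure.funMap (fsym c) v := by
  rw [eq_vec_fin_one v]
  rfl

theorem relMap_extStructure_castSucc (m : M) (k : Fin c) (v : Fin 1 → M) :
    @Structure.RelMap _ M (extStructure c M m) 1 (Fin.castSucc k) v ↔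
      Structure.RelMap (rsym c k) v := by
  rw [eq_vec_fin_one v]
  exact iff_of_eq (dif_pos k.isLt)

theorem relMap_extStructure_last (m : M) (v : Fin 1 → M) :
    @Structure.RelMap _ M (extStructure c M m) 1 (Fin.last c) v ↔ v 0 = m :=
  iff_of_eq (dif_neg (lt_irrefl c))

variable (c) in
def unmarkTerm {β : Type*} : (mapLang (c + 1)).Term β → (mapLang c).Term β
  | .var a => .var a
  | @Term.func _ _ 1 _ ts => .func (fsym c) fun i => unmarkTerm (ts i)
  | @Term.func _ _ 0 f _ => Empty.elim f
  | @Term.func _ _ (_ + 2) f _ => Empty.elim f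

theorem realize_unmarkTerm (m : M) {β : Type*} (v : β → M) (t : (mapLang (c + 1)).Term β) :
    (unmarkTerm c t).realize v = @Term.realize _ M (extStructure c M m) _ v t := by
  let _ := extStructure c M m
  induction t with
  | var => rfl
  | @func l f ts ih =>
    match l, f, ts, ih with
    | 1, f, ts, ih =>
      rw [Term.realize_func, funMap_extStructure]
      exact congrArg (Structure.funMap (fsym c)) (funext ih)
    | 0, f, _, _ => exact Empty.elim f
    | _ + 2, f, _, _ => exact Empty.elim f

variable (c) in
/-- The free variable `Sum.inr 0` stands for the marked point. -/
def unmark {α : Type*} : ∀ {n : ℕ}, (mapLang (c + 1)).BoundedFormula α n →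
    (mapLang c).BoundedFormula (α ⊕ Fin 1) n
  | _, .falsum => .falsum
  | _, .equal t₁ t₂ =>
      .equal ((unmarkTerm c t₁).relabel (Sum.map Sum.inl id))
        ((unmarkTerm c t₂).relabel (Sum.map Sum.inl id))
  | _, @BoundedFormula.rel _ _ _ 1 R ts =>
      Fin.lastCases (motive := fun _ => (mapLang c).BoundedFormula (α ⊕ Fin 1) _)
        (.equal ((unmarkTerm c (ts 0)).relabel (Sum.map Sum.inl id))
          (.var (Sum.inl (Sum.inr 0))))
        (fun k => .rel (rsym c k) fun i => (unmarkTerm c (ts i)).relabel (Sum.map Sum.inl id))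
        (R : Fin (c + 1))
  | _, @BoundedFormula.rel _ _ _ 0 R _ => Empty.elim R
  | _, @BoundedFormula.rel _ _ _ (_ + 2) R _ => Empty.elim R
  | _, .imp φ ψ => .imp (unmark φ) (unmark ψ)
  | _, .all φ => .all (unmark φ)

theorem realize_relabel_unmarkTerm (m : M) {α : Type*} {n : ℕ} (v : α → M) (xs : Fin n → M)
    (t : (mapLang (c + 1)).Term (α ⊕ Fin n)) :
    Term.realize (Sum.elim (Sum.elim v fun _ => m) xs)
        ((unmarkTerm c t).relabel (Sum.map Sum.inl id : α ⊕ Fin n → (α ⊕ Fin 1) ⊕ Fin n)) =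
      @Term.realize _ M (extStructure c M m) _ (Sum.elim v xs) t := by
  rw [Term.realize_relabel, ← realize_unmarkTerm m]
  congr 1
  ext (_ | _) <;> rfl

theorem realize_unmark (m : M) {α : Type*} {n : ℕ} (φ : (mapLang (c + 1)).BoundedFormula α n)
    (v : α → M) (xs : Fin n → M) :
    (unmark c φ).Realize (Sum.elim v fun _ => m) xs ↔
      @BoundedFormula.Realize _ M (extStructure c M m) _ _ φ v xs := by
  let _ := extStructure c M m
  induction φ with
  | falsum => rfl
  | equal t₁ t₂ => simp only [unmark, BoundedFormula.Realize, realize_relabel_unmarkTerm m]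
  | @rel _ l R ts =>
    match l, R, ts with
    | 1, R, ts =>
      revert R
      refine Fin.lastCases ?_ fun k => ?_
      · simp only [unmark, Fin.lastCases_last, BoundedFormula.Realize,
          realize_relabel_unmarkTerm m, Term.realize_var, Sum.elim_inl, Sum.elim_inr]
        exact (relMap_extStructure_last m fun i => (ts i).realize (Sum.elim v xs)).symm
      · simp only [unmark, Fin.lastCases_castSucc, BoundedFormula.Realize,
          realize_relabel_unmarkTerm m]
        exact (relMap_extStructure_castSucc m k _).symm
    | 0, R, _ => exact Empty.elim R
    | _ + 2, R, _ => exact Empty.elim R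
  | imp φ ψ ihφ ihψ => exact imp_congr (ihφ xs) (ihψ xs)
  | all φ ih => exact forall_congr' fun a => ih (Fin.snoc xs a)

theorem realize_unmark_formula (m : M) {α : Type*} (φ : (mapLang (c + 1)).Formula α)
    (v : α → M) :
    Formula.Realize (unmark c φ) (Sum.elim v fun _ => m) ↔
      @Formula.Realize _ M (extStructure c M m) _ φ v :=
  realize_unmark m φ v default

theorem isModeling_extStructure [MeasurableSpace M] (hM : IsModeling c M) (m : M) :
    @IsModeling (c + 1) M _ (extStructure c M m) := by
  intro p φ
  let g : Fin p ⊕ Fin 1 → Fin (p + 1) := Sum.elim Fin.castSucc fun _ => Fin.last p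
  let ψ : (mapLang c).Formula (Fin (p + 1)) := Formula.relabel g (unmark c φ)
  have hpre : {v : Fin p → M | @Formula.Realize _ M (extStructure c M m) _ φ v} =
      (fun u => Fin.snoc u m) ⁻¹' {w | ψ.Realize w} := by
    ext u
    have hsnoc : (Fin.snoc u m : Fin (p + 1) → M) ∘ g = Sum.elim u fun _ => m := by
      ext (i | _) <;> simp [g]
    simp only [mem_ofPred_eq, mem_preimage, ψ, Formula.realize_relabel, hsnoc,
      realize_unmark_formula]
  rw [hpre]
  refine (hM (p + 1) ψ).preimage (measurable_pi_iff.2 (Fin.lastCases ?_ fun i => ?_))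
  · simp
  · simpa using measurable_pi_apply i

variable (c) in
def castSuccLHom : mapLang c →ᴸ mapLang (c + 1) where
  onFunction {n} f := match n, f with
    | 1, f => f
    | 0, f => Empty.elim f
    | _ + 2, f => Empty.elim f
  onRelation {n} R := match n, R with
    | 1, R => Fin.castSucc R
    | 0, R => Empty.elim R
    | _ + 2, R => Empty.elim R

theorem isExpansionOn_castSuccLHom (m : M) :
    @LHom.IsExpansionOn _ _ (castSuccLHom c) M _ (extStructure c M m) := by
  let _ := extStructure c M m
  constructor
  · intro n f v
    match n, f with
    | 1, _ => exact funMap_extStructure m _ v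
    | 0, f => exact Empty.elim f
    | _ + 2, f => exact Empty.elim f
  · intro n R v
    match n, R with
    | 1, R => exact propext (relMap_extStructure_castSucc m R v)
    | 0, R => exact Empty.elim R
    | _ + 2, R => exact Empty.elim R

theorem hasFMP_of_hasFMP_extStructure (m : M) (h : @HasFMP (c + 1) M (extStructure c M m)) :
    HasFMP c M := by
  let _ := extStructure c M m
  have := isExpansionOn_castSuccLHom (c := c) m
  intro θ hθ
  obtain ⟨F, _, hF, hFθ⟩ := h _ ((LHom.realize_onSentence M (castSuccLHom c) θ).2 hθ)
  let _ := (castSuccLHom c).reduct F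
  exact ⟨F, _, hF, (LHom.realize_onSentence F (castSuccLHom c) θ).1 hFθ⟩

theorem realize_iExs_unmark (θ : (mapLang (c + 1)).Sentence) :
    M ⊨ Formula.iExs (Fin 1) (unmark c θ) ↔
      ∃ m : M, @Sentence.Realize _ M (extStructure c M m) θ := by
  rw [Sentence.Realize, Formula.realize_iExs]
  refine ⟨fun ⟨v, hv⟩ => ⟨v 0, (realize_unmark_formula (v 0) θ default).1 ?_⟩,
    fun ⟨m, hm⟩ => ⟨fun _ => m, (realize_unmark_formula m θ default).2 hm⟩⟩
  rwa [show (fun _ => v 0) = v from funext fun i => congrArg v (Subsingleton.elim 0 i)]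

theorem hasFMP_extStructure_of_hasFMP (m : M) (h : HasFMP c M) :
    @HasFMP (c + 1) M (extStructure c M m) := by
  intro θ hθ
  obtain ⟨F, _, hF, hFθ⟩ := h _ ((realize_iExs_unmark θ).2 ⟨m, hθ⟩)
  obtain ⟨a, ha⟩ := (realize_iExs_unmark θ).1 hFθ
  exact ⟨F, extStructure c F a, hF, ha⟩

end

/-- Marking exactly one element of a mapping modeling with a new unary
relation yields a modeling; moreover the marked structure satisfies the FMTP iff the original
one does, and has the finite model property iff the original one does. -/
theorem marking_one_element (c : ℕ) (M : MMod c) (m : M.carrier) :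
    @IsModeling (c + 1) M.carrier M.ms (extStructure c M.carrier m) ∧
    (FMTP (@fmap (c + 1) M.carrier (extStructure c M.carrier m)) M.ν ↔
      FMTP (fmap c M.carrier) M.ν) ∧
    (@HasFMP (c + 1) M.carrier (extStructure c M.carrier m) ↔ HasFMP c M.carrier) :=
  ⟨isModeling_extStructure M.borel m, by rw [fmap_extStructure],
    hasFMP_of_hasFMP_extStructure m, hasFMP_extStructure_of_hasFMP m⟩

end MapApprox
end

section
/- Let R > 2r be positive integers and let μ be a probability measure on 𝒯_R(σ) that satisfies the (R,r)-restricted FMTP. Then for every ε > 0 there exists a probability measure μ̂ on 𝒯_R(σ) taking only rational values, having the same support as μ, satisfying the (R,r)-restricted FMTP, and such that the total variation distance ‖μ − μ̂‖_TV < ε. -/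
open FirstOrder Language Filter Topology Set
open MeasureTheory (Measure IsProbabilityMeasure)
open scoped ENNReal NNReal

/-!
Once the support `S` of `μ` is fixed, the restricted FMTP says that for every pair `(t₁, t₂)` of
rank-`r` projections the transport excess, a linear form in `μ` with rational coefficients, is
nonnegative, and is positive only if some type of projection `t₂` is forced to have at least `r`
preimages of projection `t₁`: only such types may take companion values above `r`, which absorb
the excess. These are sign conditions on finitely many rational affine forms. Rational points
are dense in the real solution set of a rational linear system (project along a rational vector,
one equation at a time), so some rational `ν` near `μ` keeps every vanishing form zero and every
other one of the same sign, the coordinates and the total mass minus one included.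
-/

section RationalSolutions

open Matrix

variable {ι : Type*} [Fintype ι]

def ratKernel (F : Finset (ι → ℚ)) : Submodule ℚ (ι → ℚ) :=
  ⨅ a ∈ F, LinearMap.ker (dotProductBilin ℚ ℚ a)

lemma mem_ratKernel {F : Finset (ι → ℚ)} {y : ι → ℚ} :
    y ∈ ratKernel F ↔ ∀ a ∈ F, a ⬝ᵥ y = 0 := by
  simp [ratKernel, dotProductBilin]

lemma ratCast_dotProduct (a y : ι → ℚ) :
    ((a ⬝ᵥ y : ℚ) : ℝ) = (Rat.cast ∘ a) ⬝ᵥ (Rat.cast ∘ y) :=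
  (Rat.castHom ℝ).map_dotProduct a y

lemma mem_closure_ratKernel_inf_ker (Z : Submodule ℚ (ι → ℚ)) (a : ι → ℚ) {x : ι → ℝ}
    (hx : x ∈ closure ((Rat.cast ∘ ·) '' (Z : Set (ι → ℚ))))
    (hax : (Rat.cast ∘ a) ⬝ᵥ x = 0) :
    x ∈ closure ((Rat.cast ∘ ·) '' {y ∈ (Z : Set (ι → ℚ)) | a ⬝ᵥ y = 0}) := by
  by_cases hZ : ∀ u ∈ Z, a ⬝ᵥ u = 0
  · rwa [Set.sep_eq_self_iff_mem_true.mpr hZ]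
  obtain ⟨u, huZ, hau⟩ : ∃ u ∈ Z, a ⬝ᵥ u ≠ 0 := by simpa using hZ
  -- the projection along `u` onto `a = 0` maps rational points of `Z` to rational points
  set π : (ι → ℝ) → ι → ℝ := fun z => z - ((Rat.cast ∘ a) ⬝ᵥ z / (a ⬝ᵥ u : ℚ)) • (Rat.cast ∘ u)
  have hπ : Continuous π := by fun_prop
  have hπx : π x = x := by simp [π, hax]
  refine hπx ▸ map_mem_closure hπ hx ?_
  rintro _ ⟨y, hyZ, rfl⟩
  refine ⟨y - (a ⬝ᵥ y / a ⬝ᵥ u) • u, ⟨Z.sub_mem hyZ (Z.smul_mem _ huZ), ?_⟩, ?_⟩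
  · simp [dotProduct_sub, dotProduct_smul, hau]
  · ext i
    simp [π, ratCast_dotProduct]

theorem mem_closure_ratKernel (F : Finset (ι → ℚ)) {x : ι → ℝ}
    (hx : ∀ a ∈ F, (Rat.cast ∘ a) ⬝ᵥ x = 0) :
    x ∈ closure ((Rat.cast ∘ ·) '' (ratKernel F : Set (ι → ℚ))) := by
  classical
  induction F using Finset.induction_on with
  | empty =>
    have hdense : DenseRange (Pi.map fun _ : ι => (Rat.cast : ℚ → ℝ)) :=
      DenseRange.piMap fun _ => Rat.denseRange_cast
    simpa [ratKernel] using hdense.closure_eq ▸ mem_univ x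
  | insert a F _ ih =>
    have hker : (ratKernel (insert a F) : Set (ι → ℚ)) =
        {y ∈ (ratKernel F : Set (ι → ℚ)) | a ⬝ᵥ y = 0} := by
      ext y
      simp [mem_ratKernel, and_comm]
    rw [hker]
    exact mem_closure_ratKernel_inf_ker _ a (ih fun b hb => hx b (Finset.mem_insert_of_mem hb))
      (hx a (Finset.mem_insert_self a F))

theorem mem_closure_rat_solutions (F : Finset ((ι → ℚ) × ℚ)) {x : ι → ℝ}
    (hx : ∀ p ∈ F, (Rat.cast ∘ p.1) ⬝ᵥ x = p.2) :
    x ∈ closure ((Rat.cast ∘ ·) '' {y : ι → ℚ | ∀ p ∈ F, p.1 ⬝ᵥ y = p.2}) := by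
  classical
  -- homogenize: `a ⬝ᵥ y = b` becomes `(-b, a) ⬝ᵥ (t, y) = 0`, and `x` becomes `(1, x)`
  let hom : (ι → ℚ) × ℚ → Option ι → ℚ := fun p o => o.elim (-p.2) p.1
  let x' : Option ι → ℝ := fun o => o.elim 1 x
  have hx' : x' ∈ closure ((Rat.cast ∘ ·) '' (ratKernel (F.image hom) : Set _)) := by
    refine mem_closure_ratKernel _ ?_
    simp only [Finset.mem_image, forall_exists_index, and_imp, forall_apply_eq_imp_iff₂]
    intro p hp
    simp [hom, x', dotProduct, Fintype.sum_option, ← hx p hp]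
  let dehom : (Option ι → ℝ) → ι → ℝ := fun z i => z (some i) / z none
  have hcont : ContinuousAt dehom x' :=
    continuousAt_pi.2 fun i => (continuous_apply _).continuousAt.div
      (continuous_apply _).continuousAt (by simp [x'])
  have hopen : IsOpen {z : Option ι → ℝ | z none ≠ 0} :=
    isOpen_ne_fun (continuous_apply none) continuous_const
  have hx'' := hcont.continuousWithinAt.mem_closure_image
    (hopen.inter_closure ⟨by simp [x'], hx'⟩)
  have hdehom : dehom x' = x := by ext; simp [dehom, x']
  rw [hdehom] at hx''
  refine closure_mono ?_ hx''
  rintro _ ⟨_, ⟨hne, y, hy, rfl⟩, rfl⟩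
  refine ⟨(y none)⁻¹ • (y ∘ some), fun p hp => ?_, ?_⟩
  · have := mem_ratKernel.1 hy (hom p) (Finset.mem_image_of_mem _ hp)
    simp only [hom, dotProduct, Fintype.sum_option, Option.elim] at this
    have hy0 : y none ≠ 0 := by simpa using hne
    rw [dotProduct_smul, smul_eq_mul, inv_mul_eq_iff_eq_mul₀ hy0]
    simp only [dotProduct, Function.comp_apply]
    linarith
  · ext i
    simp [dehom, div_eq_inv_mul]

theorem exists_ratCast_mem_nhds_sign_eq (F : Finset ((ι → ℚ) × ℚ)) {x : ι → ℝ} {U : Set (ι → ℝ)}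
    (hU : U ∈ 𝓝 x) :
    ∃ y : ι → ℚ, Rat.cast ∘ y ∈ U ∧ ∀ p ∈ F,
      SignType.sign ((Rat.cast ∘ p.1) ⬝ᵥ (Rat.cast ∘ y) - p.2 : ℝ) =
        SignType.sign ((Rat.cast ∘ p.1) ⬝ᵥ x - p.2) := by
  classical
  have hx := mem_closure_rat_solutions (F.filter fun p => (Rat.cast ∘ p.1) ⬝ᵥ x = p.2)
    fun p hp => (Finset.mem_filter.1 hp).2
  have hsign : ∀ᶠ z in 𝓝 x, ∀ p ∈ F, (Rat.cast ∘ p.1) ⬝ᵥ x ≠ p.2 →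
      SignType.sign ((Rat.cast ∘ p.1) ⬝ᵥ z - p.2 : ℝ) =
        SignType.sign ((Rat.cast ∘ p.1) ⬝ᵥ x - p.2) := by
    refine (eventually_all_finset F).2 fun p _ => ?_
    by_cases h : (Rat.cast ∘ p.1) ⬝ᵥ x = (p.2 : ℝ)
    · exact .of_forall fun _ h' => absurd h h'
    have hcont : ContinuousAt (fun z => SignType.sign ((Rat.cast ∘ p.1) ⬝ᵥ z - p.2 : ℝ)) x :=
      (continuousAt_sign_of_ne_zero (sub_ne_zero.2 h)).comp
        (f := fun z => (Rat.cast ∘ p.1) ⬝ᵥ z - (p.2 : ℝ)) (by fun_prop)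
    rw [ContinuousAt, nhds_discrete SignType, tendsto_pure] at hcont
    exact hcont.mono fun _ hz _ => hz
  obtain ⟨_, ⟨y, hy, rfl⟩, hyU, hysign⟩ :=
    ((mem_closure_iff_frequently.1 hx).and_eventually (Filter.Eventually.and hU hsign)).exists
  refine ⟨y, hyU, fun p hp => ?_⟩
  by_cases h : (Rat.cast ∘ p.1) ⬝ᵥ x = (p.2 : ℝ)
  · rw [h, ← ratCast_dotProduct, hy p (Finset.mem_filter.2 ⟨hp, h⟩)]
  · exact hysign p hp h

theorem exists_rat_near_sign_eq {α : Type*} (S : Finset α) (F : Finset ((α → ℚ) × ℚ))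
    (μ : α → ℝ) {ε : ℝ} (hε : 0 < ε) :
    ∃ q : α → ℚ, (∀ a ∉ S, q a = 0) ∧ ∑ a ∈ S, |μ a - q a| < ε ∧ ∀ p ∈ F,
      SignType.sign (∑ a ∈ S, (p.1 a : ℝ) * q a - p.2) =
        SignType.sign (∑ a ∈ S, (p.1 a : ℝ) * μ a - p.2) := by
  classical
  let x : S → ℝ := fun a => μ a
  have hU : {z : S → ℝ | ∑ a, |x a - z a| < ε} ∈ 𝓝 x :=
    (isOpen_lt (by fun_prop) continuous_const).mem_nhds (by simpa using hε)
  obtain ⟨y, hyU, hy⟩ :=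
    exists_ratCast_mem_nhds_sign_eq (F.image fun p => (fun a : S => p.1 a, p.2)) hU
  refine ⟨fun a => if h : a ∈ S then y ⟨a, h⟩ else 0, fun a ha => dif_neg ha, ?_, fun p hp => ?_⟩
  · rw [← Finset.sum_coe_sort]
    simpa [x] using hyU
  · have := hy _ (Finset.mem_image_of_mem _ hp)
    simp only [dotProduct, Function.comp_apply] at this
    rw [← Finset.sum_coe_sort S, ← Finset.sum_coe_sort S]
    simpa using this

theorem exists_rat_prob_near_sign_eq {α : Type*} {μ : α → ℝ} {S : Finset α}
    (hS : ∀ a, 0 < μ a ↔ a ∈ S) (hμ : ∑ a ∈ S, μ a = 1) (F : Finset ((α → ℚ) × ℚ))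
    {ε : ℝ} (hε : 0 < ε) :
    ∃ q : α → ℚ, (∀ a, 0 ≤ (q a : ℝ)) ∧ (∀ a, 0 < (q a : ℝ) ↔ a ∈ S) ∧
      ∑ a ∈ S, (q a : ℝ) = 1 ∧ ∑ a ∈ S, |μ a - q a| < ε ∧ ∀ p ∈ F,
        SignType.sign (∑ a ∈ S, (p.1 a : ℝ) * q a - p.2) =
          SignType.sign (∑ a ∈ S, (p.1 a : ℝ) * μ a - p.2) := by
  classical
  -- also keep the sign of every coordinate and of the total mass minus one
  obtain ⟨q, hq_supp, hq_close, hq_sign⟩ :=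
    exists_rat_near_sign_eq S (insert (1, 1) (S.image (fun a => (Pi.single a 1, 0)) ∪ F)) μ hε
  have hqS (a) : 0 < (q a : ℝ) ↔ a ∈ S := by
    refine ⟨fun h => by_contra fun ha => by simp [hq_supp a ha] at h, fun ha => ?_⟩
    have := hq_sign (Pi.single a 1, 0)
      (Finset.mem_insert_of_mem (Finset.mem_union_left _ (Finset.mem_image_of_mem _ ha)))
    simp only [Pi.single_apply, apply_ite (Rat.cast : ℚ → ℝ), Rat.cast_one, Rat.cast_zero,
      ite_mul, one_mul, zero_mul, Finset.sum_ite_eq', if_pos ha, sub_zero] at this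
    exact sign_eq_one_iff.1 (this.trans (sign_pos ((hS a).2 ha)))
  refine ⟨q, fun a => ?_, hqS, ?_, hq_close,
    fun p hp => hq_sign p (Finset.mem_insert_of_mem (Finset.mem_union_right _ hp))⟩
  · by_cases ha : a ∈ S
    · exact ((hqS a).2 ha).le
    · simp [hq_supp a ha]
  · have := hq_sign (1, 1) (Finset.mem_insert_self _ _)
    simpa only [Pi.one_apply, Rat.cast_one, one_mul, hμ, sub_self, sign_zero,
      sign_eq_zero_iff, sub_eq_zero] using this

end RationalSolutions

lemma finsum_mem_pos_and_eq_sum_filter {α : Type*} {ρ : α → ℝ} {S : Finset α}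
    (hS : ∀ a, 0 < ρ a ↔ a ∈ S) (P : α → Prop) [DecidablePred P] (g : α → ℝ) :
    ∑ᶠ a ∈ {a | 0 < ρ a ∧ P a}, g a = ∑ a ∈ S with P a, g a := by
  have hset : {a | 0 < ρ a ∧ P a} = ↑(S.filter P) := by
    ext a
    simp [hS]
  rw [hset, finsum_mem_coe_finset]

lemma support_eq_of_pos_iff {α : Type*} {ρ : α → ℝ} {S : Finset α} (h0 : ∀ a, 0 ≤ ρ a)
    (hS : ∀ a, 0 < ρ a ↔ a ∈ S) : Function.support ρ = S := by
  ext a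
  simp [← hS, (h0 a).lt_iff_ne, eq_comm]

namespace MapApprox

open FirstOrder Language Filter Topology Set
open MeasureTheory (Measure IsProbabilityMeasure)
open scoped ENNReal

lemma companion_spec_iff {r a : ℕ} {s : ℝ} :
    (((∃ k : ℕ, k ≤ r ∧ s = k) ∨ (r : ℝ) < s) ∧ min (r : ℝ) a = min (r : ℝ) s) ↔
      ((min r a : ℕ) : ℝ) ≤ s ∧ (a < r → s = a) := by
  push_cast
  constructor
  · rintro ⟨⟨k, hk, rfl⟩ | hs, hmin⟩
    · have hk' : (k : ℝ) ≤ r := by exact_mod_cast hk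
      rw [min_eq_right hk'] at hmin
      refine ⟨hmin.le, fun ha => ?_⟩
      rw [min_eq_right (by exact_mod_cast ha.le)] at hmin
      exact hmin.symm
    · rw [min_eq_left hs.le] at hmin
      refine ⟨(min_le_left _ _).trans hs.le, fun ha => ?_⟩
      have : (a : ℝ) < r := by exact_mod_cast ha
      rw [min_eq_right this.le] at hmin
      linarith
  · rintro ⟨hle, hlt⟩
    by_cases ha : a < r
    · obtain rfl := hlt ha
      exact ⟨.inl ⟨a, ha.le, rfl⟩, rfl⟩
    · have ha' : (r : ℝ) ≤ a := by exact_mod_cast not_lt.1 ha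
      rw [min_eq_left ha'] at hle
      rw [min_eq_left ha', min_eq_left hle]
      rcases hle.lt_or_eq with hs | rfl
      · exact ⟨.inr hs, rfl⟩
      · exact ⟨.inl ⟨r, le_rfl, rfl⟩, rfl⟩

open scoped Classical in
/-- The left-hand side of the transport equation for `(t₁, t₂)` minus the least value its
right-hand side can take: a companion value must equal `adm⁻` when `adm⁻ < r`, and is otherwise
only bounded below by `r`. -/
noncomputable def transportExcess (c R r : ℕ) (S : Finset (TypeSet c)) (ρ : TypeSet c → ℝ)
    (t₁ t₂ : TypeSet c) : ℝ :=
  ∑ τ ∈ S with projType c r τ = t₁, (admPlus c R r τ t₂ : ℝ) * ρ τ -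
    ∑ τ ∈ S with projType c r τ = t₂, ((min r (admMinus c R r τ t₁) : ℕ) : ℝ) * ρ τ

open scoped Classical in
noncomputable def excessCoeff (c R r : ℕ) (t₁ t₂ τ : TypeSet c) : ℚ :=
  (if projType c r τ = t₁ then (admPlus c R r τ t₂ : ℚ) else 0) -
    if projType c r τ = t₂ then ((min r (admMinus c R r τ t₁) : ℕ) : ℚ) else 0

lemma transportExcess_eq_sum (c R r : ℕ) (S : Finset (TypeSet c)) (ρ : TypeSet c → ℝ)
    (t₁ t₂ : TypeSet c) :
    transportExcess c R r S ρ t₁ t₂ = ∑ τ ∈ S, (excessCoeff c R r t₁ t₂ τ : ℝ) * ρ τ := by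
  classical
  simp only [transportExcess, excessCoeff, Finset.sum_filter, ← Finset.sum_sub_distrib]
  refine Finset.sum_congr rfl fun τ _ => ?_
  split_ifs <;> push_cast <;> ring

/-- The excess can be absorbed by the companion values that are free to exceed `r`. -/
def TransportFeasible (c R r : ℕ) (S : Finset (TypeSet c)) (ρ : TypeSet c → ℝ) : Prop :=
  ∀ t₁ ∈ S.image (projType c r), ∀ t₂ ∈ S.image (projType c r),
    0 ≤ transportExcess c R r S ρ t₁ t₂ ∧
      (0 < transportExcess c R r S ρ t₁ t₂ →
        ∃ τ ∈ S, projType c r τ = t₂ ∧ r ≤ admMinus c R r τ t₁)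

section Feasibility

variable {c R r : ℕ} {ρ : TypeSet c → ℝ} {S : Finset (TypeSet c)}

lemma exists_pos_projType_iff (hS : ∀ τ, 0 < ρ τ ↔ τ ∈ S) (t : TypeSet c) :
    (∃ τ, 0 < ρ τ ∧ projType c r τ = t) ↔ t ∈ S.image (projType c r) := by
  simp [hS]

theorem RestrictedFMTP.transportFeasible (hS : ∀ τ, 0 < ρ τ ↔ τ ∈ S)
    (h : RestrictedFMTP c R r ρ) : TransportFeasible c R r S ρ := by
  classical
  obtain ⟨s, hs, heq⟩ := h
  intro t₁ ht₁ t₂ ht₂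
  have hcomp (τ) (hτ : τ ∈ S) := companion_spec_iff.1
    (hs τ t₁ ((hS τ).2 hτ) ((exists_pos_projType_iff hS t₁).2 ht₁))
  have hexcess : transportExcess c R r S ρ t₁ t₂ = ∑ τ ∈ S with projType c r τ = t₂,
      (s τ t₁ - ((min r (admMinus c R r τ t₁) : ℕ) : ℝ)) * ρ τ := by
    have := heq t₁ t₂ ((exists_pos_projType_iff hS t₁).2 ht₁)
      ((exists_pos_projType_iff hS t₂).2 ht₂)
    rw [finsum_mem_pos_and_eq_sum_filter hS, finsum_mem_pos_and_eq_sum_filter hS] at this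
    simp only [transportExcess, this, sub_mul, Finset.sum_sub_distrib]
  have hterm : ∀ τ ∈ S.filter (projType c r · = t₂),
      0 ≤ (s τ t₁ - ((min r (admMinus c R r τ t₁) : ℕ) : ℝ)) * ρ τ := fun τ hτ =>
    have hτS := (Finset.mem_filter.1 hτ).1
    mul_nonneg (sub_nonneg.2 (hcomp τ hτS).1) ((hS τ).2 hτS).le
  refine ⟨hexcess ▸ Finset.sum_nonneg hterm, fun hpos => ?_⟩
  obtain ⟨τ, hτ, hτpos⟩ := (Finset.sum_pos_iff_of_nonneg hterm).1 (hexcess ▸ hpos)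
  rw [Finset.mem_filter] at hτ
  refine ⟨τ, hτ.1, hτ.2, not_lt.1 fun hlt => hτpos.ne' ?_⟩
  rw [(hcomp τ hτ.1).2 hlt, min_eq_right hlt.le, sub_self, zero_mul]

theorem TransportFeasible.restrictedFMTP (hS : ∀ τ, 0 < ρ τ ↔ τ ∈ S)
    (h : TransportFeasible c R r S ρ) : RestrictedFMTP c R r ρ := by
  classical
  let freeMass (t₁ t₂ : TypeSet c) : ℝ :=
    ∑ τ ∈ S with projType c r τ = t₂ ∧ r ≤ admMinus c R r τ t₁, ρ τ
  -- the excess is spread over the free companion values proportionally to their mass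
  let s (τ t : TypeSet c) : ℝ := ((min r (admMinus c R r τ t) : ℕ) : ℝ) +
    if r ≤ admMinus c R r τ t then
      transportExcess c R r S ρ t (projType c r τ) / freeMass t (projType c r τ) else 0
  have hfreeMass (t₁ t₂) : 0 ≤ freeMass t₁ t₂ :=
    Finset.sum_nonneg fun τ hτ => ((hS τ).2 (Finset.mem_filter.1 hτ).1).le
  refine ⟨s, fun τ t hτ ht => companion_spec_iff.2 ⟨?_, fun hlt => ?_⟩, fun t₁ t₂ ht₁ ht₂ => ?_⟩
  · have hE := (h t ((exists_pos_projType_iff hS t).1 ht) (projType c r τ)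
      (Finset.mem_image_of_mem _ ((hS τ).1 hτ))).1
    refine le_add_of_nonneg_right ?_
    split_ifs
    exacts [div_nonneg hE (hfreeMass _ _), le_rfl]
  · simp [s, not_le.2 hlt, hlt.le]
  obtain ⟨hE, hE_pos⟩ := h t₁ ((exists_pos_projType_iff hS t₁).1 ht₁)
    t₂ ((exists_pos_projType_iff hS t₂).1 ht₂)
  have hfree : ∑ τ ∈ S with projType c r τ = t₂, (if r ≤ admMinus c R r τ t₁ then
      transportExcess c R r S ρ t₁ (projType c r τ) / freeMass t₁ (projType c r τ) else 0) *
        ρ τ = transportExcess c R r S ρ t₁ t₂ := by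
    have hM : freeMass t₁ t₂ = 0 → transportExcess c R r S ρ t₁ t₂ = 0 := by
      intro hM
      refine le_antisymm (not_lt.1 fun hpos => ?_) hE
      obtain ⟨τ, hτS, hτt, hτr⟩ := hE_pos hpos
      have hτ0 := (Finset.sum_eq_zero_iff_of_nonneg fun τ hτ =>
        ((hS τ).2 (Finset.mem_filter.1 hτ).1).le).1 hM τ (Finset.mem_filter.2 ⟨hτS, hτt, hτr⟩)
      exact ((hS τ).2 hτS).ne' hτ0
    calc _ = ∑ τ ∈ S with projType c r τ = t₂, if r ≤ admMinus c R r τ t₁ then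
          transportExcess c R r S ρ t₁ t₂ / freeMass t₁ t₂ * ρ τ else 0 :=
          Finset.sum_congr rfl fun τ hτ => by rw [(Finset.mem_filter.1 hτ).2]; split_ifs <;> simp
      _ = transportExcess c R r S ρ t₁ t₂ / freeMass t₁ t₂ * freeMass t₁ t₂ := by
          rw [← Finset.sum_filter, Finset.filter_filter, Finset.mul_sum]
      _ = _ := div_mul_cancel_of_imp hM
  rw [finsum_mem_pos_and_eq_sum_filter hS, finsum_mem_pos_and_eq_sum_filter hS]
  simp only [s, add_mul, Finset.sum_add_distrib, hfree]
  rw [transportExcess]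
  ring

theorem TransportFeasible.of_sign_eq {ν : TypeSet c → ℝ} (h : TransportFeasible c R r S ρ)
    (hsign : ∀ t₁ ∈ S.image (projType c r), ∀ t₂ ∈ S.image (projType c r),
      SignType.sign (transportExcess c R r S ν t₁ t₂) =
        SignType.sign (transportExcess c R r S ρ t₁ t₂)) :
    TransportFeasible c R r S ν := by
  intro t₁ ht₁ t₂ ht₂
  have hs := hsign t₁ ht₁ t₂ ht₂
  obtain ⟨hnonneg, hpos⟩ := h t₁ ht₁ t₂ ht₂
  exact ⟨sign_nonneg_iff.1 (hs ▸ sign_nonneg_iff.2 hnonneg),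
    fun h' => hpos (sign_eq_one_iff.1 (hs ▸ sign_eq_one_iff.2 h'))⟩

end Feasibility

theorem rational_approximation_of_restricted_fmtp_general (c r R : ℕ)
    (μ : TypeSet c → ℝ)
    (hnonneg : ∀ τ, 0 ≤ μ τ)
    (hfin : (Function.support μ).Finite)
    (hsum : ∑ᶠ τ, μ τ = 1)
    (hfmtp : RestrictedFMTP c R r μ)
    (ε : ℝ) (hε : 0 < ε) :
    ∃ ν : TypeSet c → ℝ,
      (∀ τ, ∃ q : ℚ, ν τ = (q : ℝ)) ∧
      (∀ τ, 0 ≤ ν τ) ∧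
      Function.support ν = Function.support μ ∧
      (∑ᶠ τ, ν τ = 1) ∧
      RestrictedFMTP c R r ν ∧
      (∑ᶠ τ, |μ τ - ν τ|) / 2 < ε := by
  classical
  set S := hfin.toFinset
  have hμS (τ) : 0 < μ τ ↔ τ ∈ S := by simp [S, (hnonneg τ).lt_iff_ne, eq_comm]
  have hμsupp := support_eq_of_pos_iff hnonneg hμS
  set T := S.image (projType c r)
  have hμsum : ∑ τ ∈ S, μ τ = 1 := by
    rwa [← finsum_eq_sum_of_support_subset _ hμsupp.subset]
  obtain ⟨q, hq_nonneg, hqS, hq_sum, hq_close, hq_sign⟩ := exists_rat_prob_near_sign_eq hμS hμsum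
    ((T ×ˢ T).image fun t => (excessCoeff c R r t.1 t.2, 0)) (by positivity : 0 < 2 * ε)
  have hqsupp := support_eq_of_pos_iff hq_nonneg hqS
  refine ⟨fun τ => q τ, fun τ => ⟨q τ, rfl⟩, hq_nonneg, hqsupp.trans hμsupp.symm, ?_, ?_, ?_⟩
  · rwa [finsum_eq_sum_of_support_subset _ hqsupp.subset]
  · refine ((hfmtp.transportFeasible hμS).of_sign_eq fun t₁ ht₁ t₂ ht₂ => ?_).restrictedFMTP hqS
    simpa [transportExcess_eq_sum] using hq_sign (excessCoeff c R r t₁ t₂, 0)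
      (Finset.mem_image_of_mem (fun t => (excessCoeff c R r t.1 t.2, 0))
        (Finset.mem_product.2 ⟨ht₁, ht₂⟩ : (t₁, t₂) ∈ T ×ˢ T))
  · have hsupp : (Function.support fun τ => |μ τ - q τ|) ⊆ S :=
      (Function.support_comp_subset abs_zero _).trans
        ((Function.support_sub _ _).trans (by simp [hμsupp, hqsupp]))
    rw [finsum_eq_sum_of_support_subset _ hsupp]
    linarith

/-- A probability measure on rank-`R` local types satisfying the
`(R,r)`-restricted FMTP can be approximated in total variation, within any `ε > 0`, by a
rational-valued probability measure with the same support that still satisfies the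
`(R,r)`-restricted FMTP. -/
theorem rational_approximation_of_restricted_fmtp (c r R : ℕ) (hr : 0 < r) (hR : 2 * r < R)
    (μ : TypeSet c → ℝ)
    (hsupp : ∀ τ, μ τ ≠ 0 → IsLocalType c R τ)
    (hnonneg : ∀ τ, 0 ≤ μ τ)
    (hfin : (Function.support μ).Finite)
    (hsum : ∑ᶠ τ, μ τ = 1)
    (hfmtp : RestrictedFMTP c R r μ)
    (ε : ℝ) (hε : 0 < ε) :
    ∃ ν : TypeSet c → ℝ,
      (∀ τ, ∃ q : ℚ, ν τ = (q : ℝ)) ∧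
      (∀ τ, 0 ≤ ν τ) ∧
      Function.support ν = Function.support μ ∧
      (∑ᶠ τ, ν τ = 1) ∧
      RestrictedFMTP c R r ν ∧
      (∑ᶠ τ, |μ τ - ν τ|) / 2 < ε :=
  rational_approximation_of_restricted_fmtp_general c r R μ hnonneg hfin hsum hfmtp ε hε

end MapApprox
end

section
/- Let X be a standard Borel space with a probability measure ν and let f : X → X be a Borel map such that (X, ν, f) satisfies the finitary mass transport principle. Let k ≥ 1 be an integer, let Y = X × ℤ/kℤ carry the product measure μ = ν ⊗ u, where u is the uniform probability measure on ℤ/kℤ, and define g : Y → Y by g(x, i) = (f(x), i + 1 mod k). Then (Y, μ, g) satisfies the finitary mass transport principle. -/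
open FirstOrder Language Filter Topology Set
open MeasureTheory (Measure IsProbabilityMeasure)
open scoped ENNReal NNReal

namespace MapApprox

open Filter Topology Set
open MeasureTheory (Measure IsProbabilityMeasure)
open scoped ENNReal

instance (k : ℕ) : MeasurableSpace (ZMod k) := ⊤

/-- If `(X, ν, f)` satisfies the finitary mass transport principle, then so
does the mapping `(x, i) ↦ (f x, i+1)` on `X × ℤ/kℤ` with the product of `ν` and the uniform
measure on `ℤ/kℤ`. -/
theorem fmtp_of_product_with_cyclic_group (X : Type) [MeasurableSpace X]
    [StandardBorelSpace X] (ν : Measure X) [IsProbabilityMeasure ν]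
    (f : X → X) (hf : Measurable f) (hfmtp : FMTP f ν) (k : ℕ) [NeZero k] :
    FMTP (fun y : X × ZMod k => (f y.1, y.2 + 1))
      (ν.prod ((Fintype.card (ZMod k) : ℝ≥0∞)⁻¹ • MeasureTheory.Measure.count)) := by
  classical
  haveI : MeasurableSingletonClass (ZMod k) := ⟨fun _ => trivial⟩
  set c : ℝ≥0∞ := (Fintype.card (ZMod k) : ℝ≥0∞)⁻¹ with hc
  have hcne : c ≠ ∞ := by
    rw [hc, ENNReal.inv_ne_top]
    exact_mod_cast Fintype.card_ne_zero
  set g : X × ZMod k → X × ZMod k := fun y => (f y.1, y.2 + 1) with hgdef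
  set e : ZMod k → X → X × ZMod k := fun j x => (x, j) with he
  have hemb : ∀ j, MeasurableEmbedding (e j) := fun j => measurableEmbedding_prod_mk_right j
  have heinj : ∀ j, Function.Injective (e j) := fun j => (hemb j).injective
  have hadd : Measurable (fun y : X × ZMod k => y.2 + 1) :=
    fun t _ => measurable_snd (MeasurableSpace.measurableSet_top
      (s := (fun i : ZMod k => i + 1) ⁻¹' t))
  have hgm : Measurable g := (hf.comp measurable_fst).prodMk hadd
  -- fiber description
  have hfib : ∀ (x : X) (i : ZMod k), g ⁻¹' {(x, i)} = e (i - 1) '' (f ⁻¹' {x}) := by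
    intro x i
    ext ⟨u, j⟩
    simp only [hgdef, he, Set.mem_preimage, Set.mem_singleton_iff, Prod.mk.injEq, Set.mem_image]
    constructor
    · rintro ⟨h1, h2⟩
      exact ⟨u, h1, rfl, by rw [← h2]; ring⟩
    · rintro ⟨v, hv, rfl, rfl⟩
      exact ⟨hv, by ring⟩
  haveI : MeasureTheory.SFinite (c • (MeasureTheory.Measure.count : Measure (ZMod k))) := by
    haveI : MeasureTheory.IsFiniteMeasure
        (c • (MeasureTheory.Measure.count : Measure (ZMod k))) := by
      refine ⟨?_⟩
      rw [MeasureTheory.Measure.smul_apply, smul_eq_mul]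
      exact ENNReal.mul_lt_top hcne.lt_top (MeasureTheory.measure_lt_top _ _)
    infer_instance
  -- decomposition of the product measure
  have hprod : ν.prod (c • MeasureTheory.Measure.count)
      = c • MeasureTheory.Measure.sum (fun j : ZMod k => ν.map (e j)) := by
    have h2 : ν.prod (MeasureTheory.Measure.count : Measure (ZMod k))
        = MeasureTheory.Measure.sum (fun j : ZMod k => ν.map (e j)) := by
      have h1 : (MeasureTheory.Measure.count : Measure (ZMod k))
          = MeasureTheory.Measure.sum MeasureTheory.Measure.dirac := rfl
      rw [h1, MeasureTheory.Measure.prod_sum_right]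
      congr 1
      funext j
      exact MeasureTheory.Measure.prod_dirac j
    have h3 : ν.prod (c • MeasureTheory.Measure.count)
        = c • ν.prod (MeasureTheory.Measure.count : Measure (ZMod k)) := by
      ext s hs
      rw [MeasureTheory.Measure.prod_apply hs, MeasureTheory.Measure.smul_apply,
        MeasureTheory.Measure.prod_apply hs, smul_eq_mul, ← MeasureTheory.lintegral_const_mul' c _ hcne]
      simp only [MeasureTheory.Measure.smul_apply, smul_eq_mul]
    rw [h3, h2]
  constructor
  · -- part 1
    have hset : {y : X × ZMod k | (g ⁻¹' {y}).Infinite}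
        = {x | (f ⁻¹' {x}).Infinite} ×ˢ (Set.univ : Set (ZMod k)) := by
      ext ⟨x, i⟩
      simp only [Set.mem_setOf_eq, Set.mem_prod, Set.mem_univ, and_true]
      rw [hfib x i]
      exact Set.infinite_image_iff (heinj (i - 1)).injOn
    rw [hset, MeasureTheory.Measure.prod_prod, hfmtp.1, zero_mul]
  · -- part 2
    intro A B hA hB hAfin hBfin
    set Aj : ZMod k → Set X := fun j => e j ⁻¹' A with hAj
    set Bj : ZMod k → Set X := fun j => e j ⁻¹' B with hBj
    have hAjm : ∀ j, MeasurableSet (Aj j) := fun j => (hemb j).measurable hA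
    have hBjm : ∀ j, MeasurableSet (Bj j) := fun j => (hemb j).measurable hB
    have hAjfin : ∀ j, Aj j ⊆ {x | (f ⁻¹' {x}).Finite} := by
      intro j x hx
      have h := hAfin hx
      rw [Set.mem_setOf_eq, hfib x j] at h
      exact Set.Finite.of_finite_image h (heinj _).injOn
    have hBjfin : ∀ j, Bj j ⊆ {x | (f ⁻¹' {x}).Finite} := by
      intro j x hx
      have h := hBfin hx
      rw [Set.mem_setOf_eq, hfib x j] at h
      exact Set.Finite.of_finite_image h (heinj _).injOn
    have hABm : MeasurableSet (A ∩ g ⁻¹' B) := hA.inter (hgm hB)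
    have hpre : ∀ j, e j ⁻¹' (A ∩ g ⁻¹' B) = Aj j ∩ f ⁻¹' (Bj (j + 1)) := by
      intro j
      ext x
      simp only [hAj, hBj, he, hgdef, Set.mem_preimage, Set.mem_inter_iff]
    -- left-hand side
    have hL : (MeasureTheory.Measure.sum fun j : ZMod k => ν.map (e j)) (A ∩ g ⁻¹' B)
        = ∑' j : ZMod k, ν (Aj j ∩ f ⁻¹' (Bj (j + 1))) := by
      rw [MeasureTheory.Measure.sum_apply _ hABm]
      congr 1
      funext j
      rw [MeasureTheory.Measure.map_apply (hemb j).measurable hABm, hpre j]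
    -- right-hand side
    have hR : (∫⁻ y in B, ((g ⁻¹' {y} ∩ A).encard : ℝ≥0∞)
          ∂(MeasureTheory.Measure.sum fun j : ZMod k => ν.map (e j)))
        = ∑' j : ZMod k, ∫⁻ x in Bj j, ((f ⁻¹' {x} ∩ Aj (j - 1)).encard : ℝ≥0∞) ∂ν := by
      rw [MeasureTheory.Measure.restrict_sum_of_countable, MeasureTheory.lintegral_sum_measure]
      congr 1
      funext j
      rw [MeasureTheory.Measure.restrict_map (hemb j).measurable hB,
        (hemb j).lintegral_map]
      refine MeasureTheory.lintegral_congr (fun x => ?_)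
      congr 1
      have himg : g ⁻¹' {e j x} ∩ A = e (j - 1) '' (f ⁻¹' {x} ∩ Aj (j - 1)) := by
        have : e (j - 1) '' (f ⁻¹' {x} ∩ Aj (j - 1))
            = e (j - 1) '' (f ⁻¹' {x}) ∩ A := by
          rw [hAj, Set.image_inter_preimage]
        rw [this, ← hfib x j]
      rw [himg, Function.Injective.encard_image (heinj _)]
    -- put it together
    rw [hprod, MeasureTheory.Measure.smul_apply, smul_eq_mul,
      MeasureTheory.Measure.restrict_smul, MeasureTheory.lintegral_smul_measure, hL, hR]
    congr 1
    have key : ∀ j : ZMod k, ν (Aj (j - 1) ∩ f ⁻¹' (Bj j))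
        = ∫⁻ x in Bj j, ((f ⁻¹' {x} ∩ Aj (j - 1)).encard : ℝ≥0∞) ∂ν := fun j =>
      hfmtp.2 (Aj (j - 1)) (Bj j) (hAjm _) (hBjm _) (hAjfin _) (hBjfin _)
    calc (∑' j : ZMod k, ν (Aj j ∩ f ⁻¹' (Bj (j + 1))))
        = ∑' j : ZMod k, ν (Aj (j + 1 - 1) ∩ f ⁻¹' (Bj (j + 1))) := by
          congr 1; funext j; rw [add_sub_cancel_right]
      _ = ∑' j : ZMod k, ν (Aj (j - 1) ∩ f ⁻¹' (Bj j)) :=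
          (Equiv.addRight (1 : ZMod k)).tsum_eq (fun j => ν (Aj (j - 1) ∩ f ⁻¹' (Bj j)))
      _ = ∑' j : ZMod k, ∫⁻ x in Bj j, ((f ⁻¹' {x} ∩ Aj (j - 1)).encard : ℝ≥0∞) ∂ν := by
          congr 1; funext j; exact key j

end MapApprox
end

section
/- Let L be a standard Borel space with a probability measure ν and let f : L → L be a Borel map all of whose fibers f⁻¹(x) are countable. For u ∈ L set E(u) = ⋃_{k ≥ 1} f^{-k}(u). Let ε > 0 and let v ∈ L be such that ν(E(v)) > ε, and assume that no element of {v} ∪ E(v) is periodic (f^k(x) ≠ x for all x ∈ {v} ∪ E(v) and all k ≥ 1). Then there exists u ∈ {v} ∪ E(v) such that ν(E(u)) > ε and ν(E(x)) ≤ ε for every x ∈ f⁻¹(u). -/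
open FirstOrder Language Filter Topology Set
open MeasureTheory (Measure IsProbabilityMeasure)
open scoped ENNReal NNReal

/-! Call `u` heavy if `ν(E(u)) > ε`. If every heavy `u ∈ {v} ∪ E(v)` had a heavy preimage, we
would get an infinite backward chain `v = s 0 ← s 1 ← s 2 ← ⋯` of heavy points. The sets `E(s n)` decrease, so by continuity from
above their intersection has measure at least `ε > 0` and contains some `x`. Then `f^[j₀] x = v`
and `f^[j] x = s j₀` for some `j₀, j ≥ 1`, whence `f^[j] v = f^[j₀] (f^[j] x) = v`: the vertex `v`
is periodic. -/

namespace MeasureTheory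

theorem nonempty_iInter_of_antitone {α : Type*} [MeasurableSpace α] {μ : Measure α}
    [IsFiniteMeasure μ] {A : ℕ → Set α} (hA : Antitone A) (hAm : ∀ n, MeasurableSet (A n))
    {c : ENNReal} (hc : c ≠ 0) (hcA : ∀ n, c ≤ μ (A n)) : (⋂ n, A n).Nonempty := by
  refine nonempty_of_measure_ne_zero (μ := μ) fun h => hc ?_
  rw [hA.measure_iInter (fun n => (hAm n).nullMeasurableSet) ⟨0, measure_ne_top μ _⟩] at h
  exact le_bot_iff.1 (h ▸ le_iInf hcA : c ≤ 0)

end MeasureTheory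

namespace MapApprox

open Set Function
open MeasureTheory (Measure IsProbabilityMeasure)

section IterPreimages

variable {L : Type*} {f : L → L}

theorem mem_iterPreimages_iff {u x : L} : x ∈ iterPreimages f u ↔ ∃ k, 1 ≤ k ∧ f^[k] x = u := by
  simp [iterPreimages]

theorem mem_iterPreimages_apply (f : L → L) (x : L) : x ∈ iterPreimages f (f x) :=
  mem_iterPreimages_iff.2 ⟨1, le_rfl, rfl⟩

theorem iterPreimages_subset_of_mem {u w : L} (hu : u ∈ iterPreimages f w) :
    iterPreimages f u ⊆ iterPreimages f w := by
  intro x hx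
  obtain ⟨j, hj, rfl⟩ := mem_iterPreimages_iff.1 hx
  obtain ⟨k, hk, hkw⟩ := mem_iterPreimages_iff.1 hu
  exact mem_iterPreimages_iff.2 ⟨k + j, by omega, by rwa [iterate_add_apply]⟩

theorem iterPreimages_subset_iterPreimages_apply (f : L → L) (x : L) :
    iterPreimages f x ⊆ iterPreimages f (f x) :=
  iterPreimages_subset_of_mem (mem_iterPreimages_apply f x)

theorem mem_iterPreimages_of_apply_mem_insert {v x : L}
    (hx : f x ∈ insert v (iterPreimages f v)) : x ∈ iterPreimages f v := by
  rcases hx with hx | hx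
  · exact hx ▸ mem_iterPreimages_apply f x
  · exact iterPreimages_subset_of_mem hx (mem_iterPreimages_apply f x)

theorem measurableSet_iterPreimages [MeasurableSpace L] [MeasurableSingletonClass L]
    (hf : Measurable f) (u : L) : MeasurableSet (iterPreimages f u) :=
  MeasurableSet.biUnion (to_countable _) fun k _ => hf.iterate k (measurableSet_singleton u)

theorem exists_backward_chain {P : L → Prop} {v : L} (hv : P v)
    (hP : ∀ u, P u → ∃ x, f x = u ∧ P x) :
    ∃ s : ℕ → L, s 0 = v ∧ (∀ n, f (s (n + 1)) = s n) ∧ ∀ n, P (s n) := by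
  choose g hgf hgP using hP
  let pred : {u // P u} → {u // P u} := fun u => ⟨g u.1 u.2, hgP u.1 u.2⟩
  refine ⟨fun n => (pred^[n] ⟨v, hv⟩).1, rfl, fun n => ?_, fun n => (pred^[n] ⟨v, hv⟩).2⟩
  simp only [iterate_succ_apply']
  exact hgf _ _

variable {s : ℕ → L}

theorem iterate_apply_of_backward_chain (hs : ∀ n, f (s (n + 1)) = s n) (n : ℕ) :
    f^[n] (s n) = s 0 := by
  induction n with
  | zero => rfl
  | succ n ih => rw [iterate_succ_apply, hs n, ih]

theorem antitone_iterPreimages_of_backward_chain (hs : ∀ n, f (s (n + 1)) = s n) :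
    Antitone fun n => iterPreimages f (s n) :=
  antitone_nat_of_succ_le fun n => hs n ▸ iterPreimages_subset_iterPreimages_apply f _

theorem mem_periodicPts_of_mem_iInter_iterPreimages (hs : ∀ n, f (s (n + 1)) = s n) {x : L}
    (hx : x ∈ ⋂ n, iterPreimages f (s n)) : s 0 ∈ periodicPts f := by
  obtain ⟨j₀, -, hj₀⟩ := mem_iterPreimages_iff.1 (mem_iInter.1 hx 0)
  obtain ⟨j, hj, hjx⟩ := mem_iterPreimages_iff.1 (mem_iInter.1 hx j₀)
  refine mk_mem_periodicPts hj ?_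
  calc f^[j] (s 0) = f^[j₀] (f^[j] x) := by
        rw [← hj₀, ← iterate_add_apply, add_comm, iterate_add_apply]
    _ = s 0 := by rw [hjx, iterate_apply_of_backward_chain hs]

end IterPreimages

theorem exists_minimal_heavy_preimage_tree_general (L : Type) [MeasurableSpace L]
    [StandardBorelSpace L] (ν : Measure L) [IsProbabilityMeasure ν]
    (f : L → L) (hf : Measurable f)
    (ε : ℝ) (hε : 0 < ε) (v : L)
    (hv : ENNReal.ofReal ε < ν (iterPreimages f v))
    (hper : ∀ x ∈ insert v (iterPreimages f v), ∀ k : ℕ, 1 ≤ k → f^[k] x ≠ x) :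
    ∃ u ∈ insert v (iterPreimages f v),
      ENNReal.ofReal ε < ν (iterPreimages f u) ∧
        ∀ x : L, f x = u → ν (iterPreimages f x) ≤ ENNReal.ofReal ε := by
  by_contra! hcon
  obtain ⟨s, rfl, hs, hsP⟩ := exists_backward_chain
    (P := fun u => u ∈ insert v (iterPreimages f v) ∧ ENNReal.ofReal ε < ν (iterPreimages f u))
    ⟨mem_insert v _, hv⟩ fun u ⟨hu, hνu⟩ => by
      obtain ⟨x, rfl, hνx⟩ := hcon u hu hνu
      exact ⟨x, rfl, mem_insert_of_mem _ (mem_iterPreimages_of_apply_mem_insert hu), hνx⟩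
  obtain ⟨x, hx⟩ := MeasureTheory.nonempty_iInter_of_antitone (μ := ν)
    (antitone_iterPreimages_of_backward_chain hs) (fun n => measurableSet_iterPreimages hf _)
    (ENNReal.ofReal_pos.2 hε).ne' fun n => (hsP n).2.le
  obtain ⟨k, hk, hk_periodic⟩ := mem_periodicPts_of_mem_iInter_iterPreimages hs hx
  exact hper _ (mem_insert _ _) k hk hk_periodic

/-- If `ν(E(v)) > ε` and no element of `{v} ∪ E(v)` is periodic, then there
is `u ∈ {v} ∪ E(v)` with `ν(E(u)) > ε` while `ν(E(x)) ≤ ε` for every preimage `x` of `u`. -/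
theorem exists_minimal_heavy_preimage_tree (L : Type) [MeasurableSpace L]
    [StandardBorelSpace L] (ν : Measure L) [IsProbabilityMeasure ν]
    (f : L → L) (hf : Measurable f) (hfib : ∀ x : L, (f ⁻¹' {x}).Countable)
    (ε : ℝ) (hε : 0 < ε) (v : L)
    (hv : ENNReal.ofReal ε < ν (iterPreimages f v))
    (hper : ∀ x ∈ insert v (iterPreimages f v), ∀ k : ℕ, 1 ≤ k → f^[k] x ≠ x) :
    ∃ u ∈ insert v (iterPreimages f v),
      ENNReal.ofReal ε < ν (iterPreimages f u) ∧
        ∀ x : L, f x = u → ν (iterPreimages f x) ≤ ENNReal.ofReal ε :=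
  exists_minimal_heavy_preimage_tree_general L ν f hf ε hε v hv hper

end MapApprox
end
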